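/- arXiv:1406.7041 — 6 statements merged into one kernel-verified Lean document; each statement's English description precedes it below -/
import Mathlib

section
/- Let G act by isometries on a metric space X with base point P, let g ∈ G, and suppose the orbit (gⁿ·P)_{n∈ℕ} satisfies: for all i < j, every point gᵏ·P with i ≤ k ≤ j lies within distance R of some geodesic from gⁱ·P to gʲ·P. If the orbit {gⁿ·P} is bounded with diameter ρ, then d(P, g·P) ≤ 3R. -/
/-- A geodesic from `a` to `b`, parameterized by arclength on `[0, dist a b]`. -/
def IsGeod {X : Type*} [MetricSpace X] (γ : ℝ → X) (a b : X) : Prop :=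
  γ 0 = a ∧ γ (dist a b) = b ∧
    ∀ s ∈ Set.Icc (0 : ℝ) (dist a b), ∀ t ∈ Set.Icc (0 : ℝ) (dist a b),
      dist (γ s) (γ t) = |s - t|

/-- The point `x` lies within distance `R` of the geodesic `γ` from `a` to `b`. -/
def NearGeod {X : Type*} [MetricSpace X] (R : ℝ) (x : X) (γ : ℝ → X) (a b : X) : Prop :=
  ∃ t ∈ Set.Icc (0 : ℝ) (dist a b), dist x (γ t) ≤ R

/-- "Claim A": if the orbit `(gⁿ·P)` satisfies the geodesic words
hypothesis (every intermediate orbit point `gᵏ·P`, `i ≤ k ≤ j`, lies within `R` of every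
geodesic from `gⁱ·P` to `gʲ·P`) and the orbit is bounded (diameter `ρ`), then
`d(P, g·P) ≤ 3R`. -/
theorem stmt_4 {G X : Type*} [Group G] [MetricSpace X] [MulAction G X]
    (hiso : ∀ g : G, Isometry fun x : X => g • x)
    (hgeod : ∀ a b : X, ∃ γ : ℝ → X, IsGeod γ a b)
    (P : X) (g : G) (R ρ : ℝ) (hR : 0 ≤ R)
    (hshadow : ∀ i j : ℕ, i < j → ∀ γ : ℝ → X, IsGeod γ (g ^ i • P) (g ^ j • P) →
      ∀ k : ℕ, i ≤ k → k ≤ j → NearGeod R (g ^ k • P) γ (g ^ i • P) (g ^ j • P))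
    (hbdd : ∀ m n : ℕ, dist (g ^ m • P) (g ^ n • P) ≤ ρ) :
    dist P (g • P) ≤ 3 * R := by
  by_contra hcon
  push_neg at hcon
  set D := dist P (g • P) with hD
  set ε := D - 3 * R with hε
  have hεpos : 0 < ε := by simp only [hε]; linarith
  have hρ0 : 0 ≤ ρ := le_trans dist_nonneg (hbdd 0 0)
  -- each pair of consecutive orbit points is at distance D
  have key : ∀ m : ℕ, dist (g ^ m • P) (g ^ (m + 1) • P) = D := by
    intro m
    have h1 : g ^ (m + 1) • P = g ^ m • (g • P) := by
      rw [pow_succ, mul_smul]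
    rw [h1]
    exact (hiso (g ^ m)).dist_eq P (g • P)
  obtain ⟨N, hN⟩ := exists_nat_gt (ρ / ε)
  have hNε : ρ < (N : ℝ) * ε := by
    rw [div_lt_iff₀ hεpos] at hN; linarith
  have hN0 : 0 < N := by
    rcases Nat.eq_zero_or_pos N with h | h
    · exfalso; rw [h] at hNε; simp at hNε; linarith
    · exact h
  obtain ⟨γ, hγ0, hγ1, hγgeo⟩ := hgeod (g ^ 0 • P) (g ^ N • P)
  have ht : ∀ k : ℕ, k ≤ N →
      ∃ t ∈ Set.Icc (0 : ℝ) (dist (g ^ 0 • P) (g ^ N • P)), dist (g ^ k • P) (γ t) ≤ R :=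
    fun k hk => hshadow 0 N hN0 γ ⟨hγ0, hγ1, hγgeo⟩ k (Nat.zero_le k) hk
  choose t htmem htR using ht
  -- pigeonhole on ⌊t/ε⌋
  have hbd : ∀ (k : ℕ) (hk : k ≤ N), (⌊t k hk / ε⌋).toNat < N := by
    intro k hk
    have h1 : 0 ≤ t k hk := (htmem k hk).1
    have h2 : t k hk ≤ ρ := le_trans (htmem k hk).2 (hbdd 0 N)
    have h3 : t k hk / ε < N := by
      rw [div_lt_iff₀ hεpos]; linarith
    have h4 : ⌊t k hk / ε⌋ < (N : ℤ) := by
      exact_mod_cast Int.floor_lt.2 (by exact_mod_cast h3)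
    omega
  set f : Fin (N + 1) → Fin N := fun k =>
    ⟨(⌊t k (Nat.lt_succ_iff.mp k.isLt) / ε⌋).toNat, hbd k _⟩ with hf
  obtain ⟨a, b, hab, hfab⟩ := Fintype.exists_ne_map_eq_of_card_lt f (by simp)
  -- wlog a < b as naturals
  have main : ∀ a b : Fin (N + 1), (a : ℕ) < (b : ℕ) → f a = f b → False := by
    intro a b hlt hfeq
    set ka := (a : ℕ)
    set kb := (b : ℕ)
    have hka : ka ≤ N := Nat.lt_succ_iff.mp a.isLt
    have hkb : kb ≤ N := Nat.lt_succ_iff.mp b.isLt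
    set ta := t ka hka with hta
    set tb := t kb hkb with htb
    -- floors equal, hence |ta - tb| < ε
    have hfl : ⌊ta / ε⌋ = ⌊tb / ε⌋ := by
      have h1 : (⌊ta / ε⌋).toNat = (⌊tb / ε⌋).toNat := congrArg Fin.val hfeq
      have h2 : 0 ≤ ⌊ta / ε⌋ := Int.floor_nonneg.2 (div_nonneg (htmem ka hka).1 hεpos.le)
      have h3 : 0 ≤ ⌊tb / ε⌋ := Int.floor_nonneg.2 (div_nonneg (htmem kb hkb).1 hεpos.le)
      omega
    have habs : |ta - tb| < ε := by
      have h1 : |ta / ε - tb / ε| < 1 := Int.abs_sub_lt_one_of_floor_eq_floor hfl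
      have h2 : ta / ε - tb / ε = (ta - tb) / ε := by ring
      rw [h2, abs_div, abs_of_pos hεpos, div_lt_one hεpos] at h1
      linarith
    -- the two orbit points are close
    have hclose : dist (g ^ ka • P) (g ^ kb • P) < 2 * R + ε := by
      calc dist (g ^ ka • P) (g ^ kb • P)
          ≤ dist (g ^ ka • P) (γ ta) + dist (γ ta) (γ tb) + dist (γ tb) (g ^ kb • P) :=
            dist_triangle4 _ _ _ _
        _ = dist (g ^ ka • P) (γ ta) + |ta - tb| + dist (g ^ kb • P) (γ tb) := by
            rw [hγgeo ta (htmem ka hka) tb (htmem kb hkb), dist_comm (γ tb)]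
        _ < 2 * R + ε := by
            have := htR ka hka
            have := htR kb hkb
            linarith
    -- project g^(ka+1)•P on a geodesic from g^ka•P to g^kb•P
    obtain ⟨γ', hγ'0, hγ'1, hγ'geo⟩ := hgeod (g ^ ka • P) (g ^ kb • P)
    obtain ⟨s, hsmem, hsR⟩ := hshadow ka kb hlt γ' ⟨hγ'0, hγ'1, hγ'geo⟩ (ka + 1)
      (Nat.le_succ ka) hlt
    have hd0 : (0 : ℝ) ∈ Set.Icc (0 : ℝ) (dist (g ^ ka • P) (g ^ kb • P)) :=
      ⟨le_refl 0, dist_nonneg⟩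
    have hs : dist (g ^ ka • P) (γ' s) = s := by
      have h := hγ'geo 0 hd0 s hsmem
      rw [hγ'0] at h
      rw [h, abs_sub_comm, sub_zero, abs_of_nonneg hsmem.1]
    have hcontra : D < D := by
      calc D = dist (g ^ ka • P) (g ^ (ka + 1) • P) := (key ka).symm
        _ ≤ dist (g ^ ka • P) (γ' s) + dist (γ' s) (g ^ (ka + 1) • P) := dist_triangle _ _ _
        _ = s + dist (g ^ (ka + 1) • P) (γ' s) := by rw [hs, dist_comm]
        _ ≤ dist (g ^ ka • P) (g ^ kb • P) + R := by
            have := hsmem.2; linarith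
        _ < (2 * R + ε) + R := by linarith
        _ = D := by simp only [hε]; ring
    exact lt_irrefl D hcontra
  rcases lt_or_gt_of_ne (fun h : (a : ℕ) = (b : ℕ) => hab (Fin.ext h)) with h | h
  · exact main a b h hfab
  · exact main b a h hfab.symm
end

section
/- Let X be a geodesic metric space with base point P, let x₁, x₂, …, xₖ be isometries of X, and suppose that for all 0 ≤ i < j ≤ k, each point x₁⋯xₘ·P with i ≤ m ≤ j lies within distance R of every geodesic from x₁⋯xᵢ·P to x₁⋯xⱼ·P. If d(P, x₁⋯xₖ·P) ≤ 3R, then for every subword, d(P, xᵢxᵢ₊₁⋯xⱼ·P) ≤ 5R. -/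
/-- "Claim B": let `x₁, …, xₖ` be isometries (elements of a group `G`
acting by isometries), with prefix products `π m = x₁⋯xₘ` (`π 0 = 1`).  If the shadow
path satisfies the `R`-geodesic words condition and `d(P, x₁⋯xₖ·P) ≤ 3R`, then every
subword satisfies `d(P, xᵢ⋯xⱼ·P) ≤ 5R`, where `xᵢ⋯xⱼ = (π (i−1))⁻¹ · π j`. -/
theorem stmt_5 {G X : Type*} [Group G] [MetricSpace X] [MulAction G X]
    (hiso : ∀ g : G, Isometry fun x : X => g • x)
    (hgeod : ∀ a b : X, ∃ γ : ℝ → X, IsGeod γ a b)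
    (P : X) (R : ℝ) (hR : 0 ≤ R) (k : ℕ)
    (x π : ℕ → G) (hπ0 : π 0 = 1) (hπ : ∀ m : ℕ, π (m + 1) = π m * x (m + 1))
    (hshadow : ∀ i j : ℕ, i < j → j ≤ k → ∀ γ : ℝ → X, IsGeod γ (π i • P) (π j • P) →
      ∀ m : ℕ, i ≤ m → m ≤ j → NearGeod R (π m • P) γ (π i • P) (π j • P))
    (hshort : dist P (π k • P) ≤ 3 * R) :
    ∀ i j : ℕ, 1 ≤ i → i ≤ j → j ≤ k →
      dist P (((π (i - 1))⁻¹ * π j) • P) ≤ 5 * R := by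
  intro i j hi hij hjk
  have hk : 0 < k := lt_of_lt_of_le (lt_of_lt_of_le hi hij) hjk
  obtain ⟨γ, hγ⟩ := hgeod (π 0 • P) (π k • P)
  have h0P : π 0 • P = P := by rw [hπ0, one_smul]
  -- reduce goal to dist between translates
  have key : dist P (((π (i - 1))⁻¹ * π j) • P) = dist (π (i-1) • P) (π j • P) := by
    rw [mul_smul]
    have := (hiso (π (i-1))).dist_eq P ((π (i-1))⁻¹ • (π j • P))
    simp only [smul_inv_smul] at this
    exact this.symm
  rw [key]
  obtain ⟨t1, ht1mem, ht1⟩ := hshadow 0 k hk le_rfl γ hγ (i-1) (Nat.zero_le _) (by omega)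
  obtain ⟨t2, ht2mem, ht2⟩ := hshadow 0 k hk le_rfl γ hγ j (Nat.zero_le _) hjk
  have hlen : dist (π 0 • P) (π k • P) ≤ 3 * R := by rw [h0P]; exact hshort
  have hmid : dist (γ t1) (γ t2) ≤ 3 * R := by
    rw [hγ.2.2 t1 ht1mem t2 ht2mem]
    rw [abs_sub_le_iff]
    constructor <;> nlinarith [ht1mem.1, ht1mem.2, ht2mem.1, ht2mem.2]
  calc dist (π (i-1) • P) (π j • P)
      ≤ dist (π (i-1) • P) (γ t1) + dist (γ t1) (γ t2) + dist (γ t2) (π j • P) :=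
        dist_triangle4 _ _ _ _
    _ ≤ R + 3 * R + R := by
        refine add_le_add (add_le_add ht1 hmid) ?_
        rw [dist_comm]; exact ht2
    _ = 5 * R := by ring
end

section
/- Let M be the 8×8 adjacency matrix of the accessible sub-automaton of the finite state automaton recognizing the normal forms in PSL(2,ℤ) (the automaton banning subwords ABA, A⁻¹B⁻¹A⁻¹, BAB, B⁻¹A⁻¹B⁻¹, ABA⁻¹, BAB⁻¹, A⁻¹B⁻¹A, B⁻¹A⁻¹B and cancellations). Then the spectral radius (Perron-Frobenius eigenvalue) of M equals 1 + √2. -/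
/-- The 8×8 adjacency matrix of the accessible sub-automaton of the automaton
recognizing normal forms in `PSL(2,ℤ)` (banning the subwords `ABA, A⁻¹B⁻¹A⁻¹, BAB,
B⁻¹A⁻¹B⁻¹, ABA⁻¹, BAB⁻¹, A⁻¹B⁻¹A, B⁻¹A⁻¹B` and cancellations).  The states,
named after the last two letters read, are (in order):
`AB`, `X_{¬A}B`, `BA`, `X_{¬B}A`, `A⁻¹B⁻¹`, `X_{¬A⁻¹}B⁻¹`, `B⁻¹A⁻¹`, `X_{¬B⁻¹}A⁻¹`. -/
def PSL2ZAutomatonMatrix : Matrix (Fin 8) (Fin 8) ℝ :=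
  !![0, 1, 0, 0, 0, 0, 0, 0;
     0, 1, 1, 0, 0, 0, 0, 1;
     0, 0, 0, 1, 0, 0, 0, 0;
     1, 0, 0, 1, 0, 1, 0, 0;
     0, 0, 0, 0, 0, 1, 0, 0;
     0, 0, 0, 1, 0, 1, 1, 0;
     0, 0, 0, 0, 0, 0, 0, 1;
     0, 1, 0, 0, 1, 0, 0, 1]

private lemma matrix_spectrum_iff {K : Type*} [Field K] {n : Type*} [Fintype n] [DecidableEq n]
    (M : Matrix n n K) (μ : K) :
    μ ∈ spectrum K M ↔ Module.End.HasEigenvalue (Matrix.toLin' M : Module.End K (n → K)) μ := by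
  rw [Module.End.hasEigenvalue_iff_mem_spectrum,
    ← AlgEquiv.spectrum_eq (Matrix.toLinAlgEquiv' (R := K) (n := n)) M]
  rfl

/-- The Perron eigenvector. -/
private noncomputable def vPF : Fin 8 → ℝ :=
  ![1, 1 + Real.sqrt 2, 1, 1 + Real.sqrt 2, 1, 1 + Real.sqrt 2, 1, 1 + Real.sqrt 2]

private lemma vPF_pos : ∀ i, 0 < vPF i := by
  simp only [Fin.forall_fin_succ, vPF, Matrix.cons_val_zero, Matrix.cons_val_succ,
    IsEmpty.forall_iff, and_true]
  refine ⟨by norm_num, by positivity, by norm_num, by positivity, by norm_num, by positivity,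
    by norm_num, by positivity⟩

private lemma mulVec_vPF : PSL2ZAutomatonMatrix.mulVec vPF = (1 + Real.sqrt 2) • vPF := by
  have h : Real.sqrt 2 ^ 2 = 2 := Real.sq_sqrt (by norm_num)
  simp only [PSL2ZAutomatonMatrix, vPF, Matrix.cons_mulVec, Matrix.cons_dotProduct,
    Matrix.empty_mulVec, Matrix.dotProduct_of_isEmpty, Matrix.smul_cons, Matrix.smul_empty,
    Matrix.vecHead, Matrix.vecTail, Matrix.cons_val_zero, Matrix.cons_val_succ,
    Function.comp, smul_eq_mul]
  refine congr_arg₂ _ (by nlinarith [h]) ?_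
  refine congr_arg₂ _ (by nlinarith [h]) ?_
  refine congr_arg₂ _ (by nlinarith [h]) ?_
  refine congr_arg₂ _ (by nlinarith [h]) ?_
  refine congr_arg₂ _ (by nlinarith [h]) ?_
  refine congr_arg₂ _ (by nlinarith [h]) ?_
  refine congr_arg₂ _ (by nlinarith [h]) ?_
  refine congr_arg₂ _ (by nlinarith [h]) rfl

private lemma M_nonneg : ∀ i j, 0 ≤ PSL2ZAutomatonMatrix i j := by
  intro i j
  fin_cases i <;> fin_cases j <;> norm_num [PSL2ZAutomatonMatrix]

/-- the Perron-Frobenius eigenvalue (spectral radius) of the adjacency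
matrix of the accessible sub-automaton for `PSL(2,ℤ)` equals `1 + √2`: it is an
eigenvalue, and every complex eigenvalue has modulus at most `1 + √2`. -/
theorem stmt_10 :
    (1 + Real.sqrt 2) ∈ spectrum ℝ PSL2ZAutomatonMatrix ∧
    ∀ μ : ℂ, μ ∈ spectrum ℂ (PSL2ZAutomatonMatrix.map (Complex.ofReal ·)) →
      ‖μ‖ ≤ 1 + Real.sqrt 2 := by
  set s : ℝ := 1 + Real.sqrt 2 with hs
  constructor
  · rw [matrix_spectrum_iff]
    refine Module.End.hasEigenvalue_of_hasEigenvector (x := vPF) ⟨?_, ?_⟩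
    · rw [Module.End.mem_eigenspace_iff, Matrix.toLin'_apply, mulVec_vPF]
    · intro h
      exact absurd (congrFun h 0) (by simpa using (vPF_pos 0).ne')
  · intro μ hμ
    rw [matrix_spectrum_iff] at hμ
    obtain ⟨w, hw⟩ := hμ.exists_hasEigenvector
    have hwe : (PSL2ZAutomatonMatrix.map (Complex.ofReal ·)).mulVec w = μ • w := by
      have := hw.apply_eq_smul
      rwa [Matrix.toLin'_apply] at this
    have hwne : w ≠ 0 := hw.right
    -- take the index maximizing |w i| / vPF i
    obtain ⟨i0, -, hi0⟩ := Finset.exists_max_image Finset.univ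
      (fun i => ‖w i‖ / vPF i) ⟨0, Finset.mem_univ 0⟩
    set t : ℝ := ‖w i0‖ / vPF i0 with ht
    have hkey : ∀ i, ‖w i‖ ≤ t * vPF i := by
      intro i
      have h1 := hi0 i (Finset.mem_univ i)
      calc ‖w i‖ = (‖w i‖ / vPF i) * vPF i := by
            field_simp [(vPF_pos i).ne']
        _ ≤ t * vPF i := mul_le_mul_of_nonneg_right h1 (vPF_pos i).le
    have htpos : 0 < t := by
      by_contra hc
      push_neg at hc
      apply hwne
      funext i
      have h1 : ‖w i‖ ≤ t * vPF i := hkey i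
      have h2 : t * vPF i ≤ 0 := mul_nonpos_of_nonpos_of_nonneg hc (vPF_pos i).le
      have h3 : ‖w i‖ = 0 := le_antisymm (h1.trans h2) (norm_nonneg _)
      simpa using h3
    have hwi0 : ‖w i0‖ = t * vPF i0 := by
      rw [ht]; field_simp [(vPF_pos i0).ne']
    have hwi0pos : 0 < ‖w i0‖ := by
      rw [hwi0]; exact mul_pos htpos (vPF_pos i0)
    -- estimate at row i0
    have hrow : (μ • w) i0 = ∑ j, (PSL2ZAutomatonMatrix i0 j : ℂ) * w j := by
      rw [← hwe]
      simp [Matrix.mulVec, dotProduct, Matrix.map_apply]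
    have hbound : ‖μ‖ * ‖w i0‖ ≤ s * (t * vPF i0) := by
      have h1 : ‖(μ • w) i0‖ ≤ ∑ j, PSL2ZAutomatonMatrix i0 j * ‖w j‖ := by
        rw [hrow]
        refine (norm_sum_le _ _).trans ?_
        refine Finset.sum_le_sum fun j _ => ?_
        rw [norm_mul, Complex.norm_real, Real.norm_eq_abs, abs_of_nonneg (M_nonneg i0 j)]
      have h2 : ∑ j, PSL2ZAutomatonMatrix i0 j * ‖w j‖
          ≤ ∑ j, PSL2ZAutomatonMatrix i0 j * (t * vPF j) :=
        Finset.sum_le_sum fun j _ => mul_le_mul_of_nonneg_left (hkey j) (M_nonneg i0 j)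
      have h3 : ∑ j, PSL2ZAutomatonMatrix i0 j * (t * vPF j) = t * (s * vPF i0) := by
        have h4 := congrFun mulVec_vPF i0
        simp only [Matrix.mulVec, dotProduct, Pi.smul_apply, smul_eq_mul] at h4
        calc ∑ j, PSL2ZAutomatonMatrix i0 j * (t * vPF j)
            = t * ∑ j, PSL2ZAutomatonMatrix i0 j * vPF j := by
              rw [Finset.mul_sum]; congr 1; funext j; ring
          _ = t * (s * vPF i0) := by rw [h4]
      calc ‖μ‖ * ‖w i0‖ = ‖(μ • w) i0‖ := by
            simp [mul_comm]
        _ ≤ ∑ j, PSL2ZAutomatonMatrix i0 j * ‖w j‖ := h1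
        _ ≤ ∑ j, PSL2ZAutomatonMatrix i0 j * (t * vPF j) := h2
        _ = s * (t * vPF i0) := by rw [h3]; ring
    rw [hwi0] at hbound hwi0pos
    exact le_of_mul_le_mul_right (by linarith [hbound]) hwi0pos
end

section
/- Let A be a deterministic finite state automaton whose accessible sub-automaton is recurrent (primitive transition matrix) with growth rate λ₁, and suppose the rest of the automaton (accessible sub-automaton removed) has growth rate λ₂ < λ₁ (the automaton is dominated by its accessible sub-automaton). Fix an accepted word w of length k ending at a state E of the accessible sub-automaton. Then the liminf, as l → ∞, of the proportion of accepted words of length l which begin with w and end at state E, among all accepted words of length l, is strictly positive. -/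
open Filter

section Aux

variable {α Q : Type*} [Fintype α]

/-- Constructor for `List.Vector` that keeps the type un-unfolded. -/
private def mkVec {α : Type*} {n : ℕ} (w : List α) (h : w.length = n) : List.Vector α n :=
  ⟨w, h⟩

@[simp] private lemma mkVec_toList {α : Type*} {n : ℕ} (w : List α) (h : w.length = n) :
    (mkVec w h).toList = w := rfl

/-- Sets of words of fixed length are finite. -/
private lemma aux_finite {n : ℕ} (P : List α → Prop) (h : ∀ w, P w → w.length = n) :
    Finite {w // P w} :=
  Finite.of_injective (fun w => mkVec w.1 (h _ w.2))
    (fun a b hab => Subtype.ext (by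
      have := congrArg List.Vector.toList hab
      simpa using this))

private lemma aux_card_le {n : ℕ} (P : List α → Prop) (h : ∀ w, P w → w.length = n) :
    Nat.card {w // P w} ≤ Fintype.card α ^ n := by
  have hinj : Function.Injective
      (fun w : {w // P w} => mkVec w.1 (h _ w.2)) := by
    intro a b hab
    exact Subtype.ext (by
      have := congrArg List.Vector.toList hab
      simpa using this)
  have := Nat.card_le_card_of_injective _ hinj
  simpa [Nat.card_eq_fintype_card, card_vector] using this

private lemma aux_finite_pair [Fintype Q] {n : ℕ} (P : Q × List α → Prop)
    (h : ∀ x, P x → x.2.length = n) : Finite {x // P x} :=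
  Finite.of_injective
    (fun x => ((x.1.1, mkVec x.1.2 (h _ x.2)) : Q × List.Vector α n))
    (by
      rintro ⟨⟨q, w⟩, hw⟩ ⟨⟨q', w'⟩, hw'⟩ hab
      simp only [Prod.mk.injEq] at hab
      have hww : w = w' := by
        have := congrArg List.Vector.toList hab.2
        simpa using this
      exact Subtype.ext (by simp [hab.1, hww]))

private lemma aux_card_pair_le [Fintype Q] {n : ℕ} (P : Q × List α → Prop)
    (h : ∀ x, P x → x.2.length = n) :
    Nat.card {x // P x} ≤ Fintype.card Q * Fintype.card α ^ n := by
  have hinj : Function.Injective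
      (fun x : {x // P x} => ((x.1.1, mkVec x.1.2 (h _ x.2)) : Q × List.Vector α n)) := by
    rintro ⟨⟨q, w⟩, hw⟩ ⟨⟨q', w'⟩, hw'⟩ hab
    simp only [Prod.mk.injEq] at hab
    have hww : w = w' := by
      have := congrArg List.Vector.toList hab.2
      simpa using this
    exact Subtype.ext (by simp [hab.1, hww])
  have := Nat.card_le_card_of_injective _ hinj
  simpa [Nat.card_eq_fintype_card, Fintype.card_prod, card_vector] using this

private lemma aux_rpow_pow (c : ℕ) {l : ℕ} (hl : 1 ≤ l) :
    (((c : ℝ)) ^ l) ^ (1 / (l : ℝ)) = (c : ℝ) := by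
  have hl0 : (l : ℝ) ≠ 0 := Nat.cast_ne_zero.mpr (by omega)
  rw [← Real.rpow_natCast (c : ℝ) l, ← Real.rpow_mul (Nat.cast_nonneg c), mul_one_div,
    div_self hl0, Real.rpow_one]

end Aux

/-- let `M` be a deterministic finite state automaton whose accessible
sub-automaton (states `Acc`) is recurrent, with growth rate `λ₁`, while the rest of the
automaton has growth rate `λ₂ < λ₁` (domination).  Fix an accepted word `w₀` of length
`k` ending at a state `E ∈ Acc`.  Then the liminf of the proportion, among accepted
words of length `l`, of those beginning with `w₀` and ending at `E`, is positive. -/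
theorem stmt_13 {α Q : Type*} [Fintype α] [Fintype Q] (M : DFA α Q)
    (Acc : Set Q)
    -- recurrence: paths of one fixed length `p` between any two accessible states,
    -- staying in the accessible part
    (hrec : ∃ p : ℕ, 0 < p ∧ ∀ q ∈ Acc, ∀ q' ∈ Acc, ∃ w : List α, w.length = p ∧
      (∀ i ≤ p, M.evalFrom q (w.take i) ∈ Acc) ∧ M.evalFrom q w = q')
    (lam₁ lam₂ : ℝ)
    -- `λ₁` is the growth rate of the number of words readable in the accessible part
    (h₁ : Filter.Tendsto (fun l : ℕ =>
      (Nat.card {qw : Q × List α // qw.1 ∈ Acc ∧ qw.2.length = l ∧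
        ∀ i ≤ l, M.evalFrom qw.1 (qw.2.take i) ∈ Acc} : ℝ) ^ (1 / (l : ℝ)))
      Filter.atTop (nhds lam₁))
    -- `λ₂` is the growth rate of the automaton with the accessible part removed
    (h₂ : Filter.Tendsto (fun l : ℕ =>
      (Nat.card {qw : Q × List α // qw.1 ∉ Acc ∧ qw.2.length = l ∧
        ∀ i ≤ l, M.evalFrom qw.1 (qw.2.take i) ∉ Acc} : ℝ) ^ (1 / (l : ℝ)))
      Filter.atTop (nhds lam₂))
    (hdom : lam₂ < lam₁)
    (w₀ : List α) (k : ℕ) (hk : w₀.length = k) (E : Q) (hE : E ∈ Acc)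
    (hacc : w₀ ∈ M.accepts) (heval : M.eval w₀ = E) :
    0 < Filter.liminf (fun l : ℕ =>
      (Nat.card {w : List α // w.length = l ∧ w ∈ M.accepts ∧ w₀ <+: w ∧ M.eval w = E} : ℝ) /
      (Nat.card {w : List α // w.length = l ∧ w ∈ M.accepts} : ℝ)) Filter.atTop := by
  classical
  obtain ⟨p, hp, hrec⟩ := hrec
  obtain ⟨c₁, hc₁l, hc₁mem, hc₁ev⟩ := hrec E hE E hE
  -- the alphabet is nonempty
  have hαne : Nonempty α := by
    cases c₁ with
    | nil => exfalso; simp at hc₁l; omega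
    | cons a _ => exact ⟨a⟩
  set c := Fintype.card α with hc_def
  have hc1 : 1 ≤ c := Fintype.card_pos
  have hQne : Nonempty Q := ⟨E⟩
  -- loops based at E
  have loop_add : ∀ m n : ℕ, (∃ w : List α, w.length = m ∧ M.evalFrom E w = E) →
      (∃ w : List α, w.length = n ∧ M.evalFrom E w = E) →
      (∃ w : List α, w.length = m + n ∧ M.evalFrom E w = E) := by
    rintro m n ⟨u, hu1, hu2⟩ ⟨v, hv1, hv2⟩
    exact ⟨u ++ v, by simp [hu1, hv1], by rw [DFA.evalFrom_of_append, hu2, hv2]⟩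
  have loop_mul : ∀ (a m : ℕ), (∃ w : List α, w.length = m ∧ M.evalFrom E w = E) →
      (∃ w : List α, w.length = a * m ∧ M.evalFrom E w = E) := by
    intro a m hm
    induction a with
    | zero => exact ⟨[], by simp, by simp⟩
    | succ a ih =>
        have := loop_add _ _ ih hm
        simpa [Nat.succ_mul] using this
  have loop_p : ∃ w : List α, w.length = p ∧ M.evalFrom E w = E := ⟨c₁, hc₁l, hc₁ev⟩
  have loop_p1 : ∃ w : List α, w.length = p + 1 ∧ M.evalFrom E w = E := by
    have hq₁ : M.evalFrom E (c₁.take 1) ∈ Acc := hc₁mem 1 hp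
    obtain ⟨d, hdl, -, hdev⟩ := hrec _ hq₁ E hE
    refine ⟨c₁.take 1 ++ d, ?_, ?_⟩
    · rw [List.length_append, List.length_take, hdl, hc₁l]; omega
    · rw [DFA.evalFrom_of_append]; exact hdev
  have loop_ge : ∀ m : ℕ, p * p ≤ m → ∃ w : List α, w.length = m ∧ M.evalFrom E w = E := by
    intro m hm
    have hj : m % p < p := Nat.mod_lt _ hp
    have hn : p ≤ m / p := (Nat.le_div_iff_mul_le hp).2 hm
    obtain ⟨d, hd⟩ := Nat.le.dest (le_trans hj.le hn)
    have hm' : m = (m % p) * (p + 1) + d * p := by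
      calc m = p * (m / p) + m % p := (Nat.div_add_mod m p).symm
        _ = p * (m % p + d) + m % p := by rw [hd]
        _ = (m % p) * (p + 1) + d * p := by ring
    rw [hm']
    exact loop_add _ _ (loop_mul _ _ loop_p1) (loop_mul _ _ loop_p)
  -- every state can reach the accessible part
  have reach : ∀ q : Q, ∃ w : List α, M.evalFrom q w ∈ Acc := by
    by_contra hcon
    push_neg at hcon
    obtain ⟨q0, hq0⟩ := hcon
    have hq0n : q0 ∉ Acc := by simpa using hq0 []
    -- lower bound for the "outside" count
    have hB : ∀ l : ℕ, (c : ℝ) ^ l ≤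
        (Nat.card {qw : Q × List α // qw.1 ∉ Acc ∧ qw.2.length = l ∧
          ∀ i ≤ l, M.evalFrom qw.1 (qw.2.take i) ∉ Acc} : ℝ) := by
      intro l
      haveI : Finite {qw : Q × List α // qw.1 ∉ Acc ∧ qw.2.length = l ∧
          ∀ i ≤ l, M.evalFrom qw.1 (qw.2.take i) ∉ Acc} :=
        aux_finite_pair _ (fun x hx => hx.2.1)
      have hinj : Function.Injective (fun v : List.Vector α l =>
          (⟨(q0, v.toList), hq0n, v.toList_length, fun i _ => hq0 _⟩ :
            {qw : Q × List α // qw.1 ∉ Acc ∧ qw.2.length = l ∧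
              ∀ i ≤ l, M.evalFrom qw.1 (qw.2.take i) ∉ Acc})) := by
        intro a b hab
        have := congrArg (fun x => x.1.2) hab
        exact List.Vector.eq _ _ this
      have hcard := Nat.card_le_card_of_injective _ hinj
      have hv : Nat.card (List.Vector α l) = c ^ l := by
        simp [Nat.card_eq_fintype_card, card_vector, hc_def]
      rw [hv] at hcard
      exact_mod_cast hcard
    have hB2 : ∀ᶠ l : ℕ in atTop, (c : ℝ) ≤
        (Nat.card {qw : Q × List α // qw.1 ∉ Acc ∧ qw.2.length = l ∧
          ∀ i ≤ l, M.evalFrom qw.1 (qw.2.take i) ∉ Acc} : ℝ) ^ (1 / (l : ℝ)) := by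
      refine eventually_atTop.mpr ⟨1, fun l hl => ?_⟩
      have h0 : (0 : ℝ) ≤ (c : ℝ) ^ l := by positivity
      have := Real.rpow_le_rpow h0 (hB l) (by positivity : (0 : ℝ) ≤ 1 / (l : ℝ))
      rwa [aux_rpow_pow c hl] at this
    have hc_le : (c : ℝ) ≤ lam₂ := ge_of_tendsto h₂ hB2
    -- upper bound for the "accessible" count
    have hA : ∀ l : ℕ, (Nat.card {qw : Q × List α // qw.1 ∈ Acc ∧ qw.2.length = l ∧
        ∀ i ≤ l, M.evalFrom qw.1 (qw.2.take i) ∈ Acc} : ℝ) ≤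
        (Fintype.card Q : ℝ) * (c : ℝ) ^ l := by
      intro l
      have := aux_card_pair_le (Q := Q) (n := l)
        (fun qw => qw.1 ∈ Acc ∧ qw.2.length = l ∧
          ∀ i ≤ l, M.evalFrom qw.1 (qw.2.take i) ∈ Acc) (fun x hx => hx.2.1)
      exact_mod_cast this
    have hA2 : (fun l : ℕ =>
        (Nat.card {qw : Q × List α // qw.1 ∈ Acc ∧ qw.2.length = l ∧
          ∀ i ≤ l, M.evalFrom qw.1 (qw.2.take i) ∈ Acc} : ℝ) ^ (1 / (l : ℝ))) ≤ᶠ[atTop]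
        (fun l : ℕ => (Fintype.card Q : ℝ) ^ (1 / (l : ℝ)) * (c : ℝ)) := by
      refine eventually_atTop.mpr ⟨1, fun l hl => ?_⟩
      have h1 := Real.rpow_le_rpow (Nat.cast_nonneg _) (hA l)
        (by positivity : (0 : ℝ) ≤ 1 / (l : ℝ))
      calc (Nat.card {qw : Q × List α // qw.1 ∈ Acc ∧ qw.2.length = l ∧
            ∀ i ≤ l, M.evalFrom qw.1 (qw.2.take i) ∈ Acc} : ℝ) ^ (1 / (l : ℝ))
          ≤ ((Fintype.card Q : ℝ) * (c : ℝ) ^ l) ^ (1 / (l : ℝ)) := h1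
        _ = (Fintype.card Q : ℝ) ^ (1 / (l : ℝ)) * ((c : ℝ) ^ l) ^ (1 / (l : ℝ)) :=
            Real.mul_rpow (Nat.cast_nonneg _) (by positivity)
        _ = (Fintype.card Q : ℝ) ^ (1 / (l : ℝ)) * (c : ℝ) := by rw [aux_rpow_pow c hl]
    have hQ0 : (Fintype.card Q : ℝ) ≠ 0 := by
      have : 0 < Fintype.card Q := Fintype.card_pos
      positivity
    have hQt : Filter.Tendsto (fun l : ℕ => (Fintype.card Q : ℝ) ^ (1 / (l : ℝ)) * (c : ℝ))
        atTop (nhds ((Fintype.card Q : ℝ) ^ (0 : ℝ) * (c : ℝ))) :=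
      (Filter.Tendsto.rpow tendsto_const_nhds tendsto_one_div_atTop_nhds_zero_nat
        (Or.inl hQ0)).mul_const _
    have hQt' : Filter.Tendsto (fun l : ℕ => (Fintype.card Q : ℝ) ^ (1 / (l : ℝ)) * (c : ℝ))
        atTop (nhds (c : ℝ)) := by simpa using hQt
    have hlam1 : lam₁ ≤ (c : ℝ) := le_of_tendsto_of_tendsto h₁ hQt' hA2
    linarith
  -- hence every state can reach E by some word
  have reachE : ∀ q : Q, ∃ w : List α, M.evalFrom q w = E := by
    intro q
    obtain ⟨w, hw⟩ := reach q
    obtain ⟨v, -, -, hv⟩ := hrec _ hw E hE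
    exact ⟨w ++ v, by rw [DFA.evalFrom_of_append]; exact hv⟩
  choose y hy using reachE
  set D := Finset.univ.sup (fun q : Q => (y q).length) with hD_def
  have hyD : ∀ q : Q, (y q).length ≤ D := fun q => by
    rw [hD_def]; exact Finset.le_sup (f := fun q : Q => (y q).length) (Finset.mem_univ q)
  set s := D + p * p with hs_def
  -- exact-length words to E from any state
  have hz : ∀ q : Q, ∃ z : List α, z.length = s ∧ M.evalFrom q z = E := by
    intro q
    obtain ⟨w, hw1, hw2⟩ := loop_ge (s - (y q).length) (by have := hyD q; omega)
    refine ⟨y q ++ w, ?_, ?_⟩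
    · rw [List.length_append, hw1]; have := hyD q; omega
    · rw [DFA.evalFrom_of_append, hy q]; exact hw2
  choose z hz1 hz2 using hz
  have hEacc : E ∈ M.accept := by
    have := (DFA.mem_accepts M).mp hacc
    rwa [heval] at this
  have heval' : ∀ x : List α, M.eval (w₀ ++ x) = M.evalFrom E x := by
    intro x
    rw [show M.eval (w₀ ++ x) = M.evalFrom (M.eval w₀) x from
      DFA.evalFrom_of_append M M.start w₀ x, heval]
  -- counting
  have hNle : ∀ l : ℕ,
      Nat.card {w : List α // w.length = l ∧ w ∈ M.accepts ∧ w₀ <+: w ∧ M.eval w = E} ≤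
      Nat.card {w : List α // w.length = l ∧ w ∈ M.accepts} := by
    intro l
    haveI : Finite {w : List α // w.length = l ∧ w ∈ M.accepts} :=
      aux_finite _ (fun w hw => hw.1)
    exact Nat.card_le_card_of_injective
      (fun w => ⟨w.1, w.2.1, w.2.2.1⟩)
      (fun a b hab => by
        have h := congrArg Subtype.val hab
        exact Subtype.ext h)
  have hDle : ∀ l : ℕ, Nat.card {w : List α // w.length = l ∧ w ∈ M.accepts} ≤ c ^ l :=
    fun l => aux_card_le _ (fun w hw => hw.1)
  have hNge : ∀ l : ℕ, k + s ≤ l → c ^ (l - (k + s)) ≤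
      Nat.card {w : List α // w.length = l ∧ w ∈ M.accepts ∧ w₀ <+: w ∧ M.eval w = E} := by
    intro l hl
    haveI : Finite {w : List α // w.length = l ∧ w ∈ M.accepts ∧ w₀ <+: w ∧ M.eval w = E} :=
      aux_finite _ (fun w hw => hw.1)
    have hprop : ∀ v : List.Vector α (l - (k + s)),
        (w₀ ++ (v.toList ++ z (M.evalFrom E v.toList))).length = l ∧
        (w₀ ++ (v.toList ++ z (M.evalFrom E v.toList))) ∈ M.accepts ∧
        w₀ <+: (w₀ ++ (v.toList ++ z (M.evalFrom E v.toList))) ∧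
        M.eval (w₀ ++ (v.toList ++ z (M.evalFrom E v.toList))) = E := by
      intro v
      have hev : M.eval (w₀ ++ (v.toList ++ z (M.evalFrom E v.toList))) = E := by
        rw [heval' _, DFA.evalFrom_of_append, hz2]
      refine ⟨?_, ?_, ?_, hev⟩
      · rw [List.length_append, List.length_append, hk, v.toList_length, hz1]; omega
      · rw [DFA.mem_accepts, hev]; exact hEacc
      · exact List.prefix_append _ _
    have hinj : Function.Injective (fun v : List.Vector α (l - (k + s)) =>
        (⟨w₀ ++ (v.toList ++ z (M.evalFrom E v.toList)), hprop v⟩ :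
          {w : List α // w.length = l ∧ w ∈ M.accepts ∧ w₀ <+: w ∧ M.eval w = E})) := by
      intro a b hab
      have h1 : w₀ ++ (a.toList ++ z (M.evalFrom E a.toList)) =
          w₀ ++ (b.toList ++ z (M.evalFrom E b.toList)) := congrArg Subtype.val hab
      have h2 := List.append_cancel_left h1
      have h3 := (List.append_inj h2 (by rw [a.toList_length, b.toList_length])).1
      exact List.Vector.eq _ _ h3
    have hcard := Nat.card_le_card_of_injective _ hinj
    have hv : Nat.card (List.Vector α (l - (k + s))) = c ^ (l - (k + s)) := by
      simp [Nat.card_eq_fintype_card, card_vector, hc_def]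
    rwa [hv] at hcard
  have hNpos : ∀ l : ℕ, k + s ≤ l →
      0 < Nat.card {w : List α // w.length = l ∧ w ∈ M.accepts ∧ w₀ <+: w ∧ M.eval w = E} :=
    fun l hl => lt_of_lt_of_le (Nat.one_le_pow _ _ (by omega)) (hNge l hl)
  -- the ratio is eventually at least ε
  set ε : ℝ := ((c : ℝ) ^ (k + s))⁻¹ with hε_def
  have hcR : (0 : ℝ) < (c : ℝ) := by exact_mod_cast hc1
  have hεpos : 0 < ε := inv_pos.mpr (pow_pos hcR _)
  have hev : ∀ᶠ l : ℕ in atTop, ε ≤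
      (Nat.card {w : List α // w.length = l ∧ w ∈ M.accepts ∧ w₀ <+: w ∧ M.eval w = E} : ℝ) /
      (Nat.card {w : List α // w.length = l ∧ w ∈ M.accepts} : ℝ) := by
    refine eventually_atTop.mpr ⟨k + s, fun l hl => ?_⟩
    have hD1 : 0 < Nat.card {w : List α // w.length = l ∧ w ∈ M.accepts} :=
      lt_of_lt_of_le (hNpos l hl) (hNle l)
    have hDpos : (0 : ℝ) < (Nat.card {w : List α // w.length = l ∧ w ∈ M.accepts} : ℝ) := by
      exact_mod_cast hD1
    rw [le_div_iff₀ hDpos]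
    calc ε * (Nat.card {w : List α // w.length = l ∧ w ∈ M.accepts} : ℝ)
        ≤ ε * (c : ℝ) ^ l := by
          refine mul_le_mul_of_nonneg_left ?_ (le_of_lt hεpos)
          exact_mod_cast hDle l
      _ = (c : ℝ) ^ (l - (k + s)) := by
          have hcl : (c : ℝ) ^ l = (c : ℝ) ^ (l - (k + s)) * (c : ℝ) ^ (k + s) := by
            rw [← pow_add]; congr 1; omega
          rw [hcl, mul_comm ((c : ℝ) ^ (l - (k + s))) _, ← mul_assoc,
            inv_mul_cancel₀ (pow_pos hcR _).ne', one_mul]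
      _ ≤ (Nat.card {w : List α // w.length = l ∧ w ∈ M.accepts ∧ w₀ <+: w ∧
            M.eval w = E} : ℝ) := by exact_mod_cast hNge l hl
  have hbdd : Filter.IsCoboundedUnder (· ≥ ·) atTop (fun l : ℕ =>
      (Nat.card {w : List α // w.length = l ∧ w ∈ M.accepts ∧ w₀ <+: w ∧ M.eval w = E} : ℝ) /
      (Nat.card {w : List α // w.length = l ∧ w ∈ M.accepts} : ℝ)) := by
    refine Filter.isCoboundedUnder_ge_of_le atTop (x := 1) (fun l => ?_)
    rcases eq_or_ne (Nat.card {w : List α // w.length = l ∧ w ∈ M.accepts}) 0 with h | h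
    · simp [h]
    · have hpos : (0 : ℝ) < (Nat.card {w : List α // w.length = l ∧ w ∈ M.accepts} : ℝ) := by
        exact_mod_cast Nat.pos_of_ne_zero h
      rw [div_le_one hpos]
      exact_mod_cast hNle l
  have hlim := Filter.le_liminf_of_le hbdd hev
  exact lt_of_lt_of_le hεpos hlim
end

section
/- Let A be a primitive nonnegative integer square matrix (transition matrix of a recurrent automaton), fix a state E, and fix a word (path) u of length p in the automaton starting at some state of the accessible part. Then the proportion, among paths of length l based at E (loops from E to E), of those which do NOT contain u as a (consecutive) sub-path, tends to 0 exponentially fast as l → ∞. -/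
set_option linter.unusedSectionVars false


/-- `IsPathFrom src tgt q w q'` : the list of edges `w` is a directed path from `q`
to `q'` in the graph with edge-source map `src` and edge-target map `tgt`. -/
def IsPathFrom {σ Q : Type*} (src tgt : σ → Q) : Q → List σ → Q → Prop
  | q, [], q' => q = q'
  | q, e :: es, q' => src e = q ∧ IsPathFrom src tgt (tgt e) es q'

section Aux

open scoped Classical

variable {σ Q : Type*} [Fintype σ] [Fintype Q] (src tgt : σ → Q)

@[simp] lemma isPathFrom_nil {q q' : Q} : IsPathFrom src tgt q ([] : List σ) q' ↔ q = q' :=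
  Iff.rfl

@[simp] lemma isPathFrom_cons {e : σ} {es : List σ} {q q' : Q} :
    IsPathFrom src tgt q (e :: es) q' ↔ src e = q ∧ IsPathFrom src tgt (tgt e) es q' :=
  Iff.rfl

lemma isPathFrom_append {w₁ w₂ : List σ} {q q' : Q} :
    IsPathFrom src tgt q (w₁ ++ w₂) q' ↔
      ∃ qm, IsPathFrom src tgt q w₁ qm ∧ IsPathFrom src tgt qm w₂ q' := by
  induction w₁ generalizing q with
  | nil => simp
  | cons e es ih => simp [ih, and_assoc]

lemma isPathFrom_unique {w : List σ} {q q' q'' : Q}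
    (h : IsPathFrom src tgt q w q') (h' : IsPathFrom src tgt q w q'') : q' = q'' := by
  induction w generalizing q with
  | nil => exact h.symm.trans h'
  | cons e es ih => exact ih h.2 h'.2

/-- The finite set of paths of length `n` from `q` to `q'`. -/
noncomputable def pathsF (q q' : Q) (n : ℕ) : Finset (List σ) :=
  ((Finset.univ : Finset (List.Vector σ n)).image List.Vector.toList).filter
    (fun w => IsPathFrom src tgt q w q')

lemma mem_pathsF {q q' : Q} {n : ℕ} {w : List σ} :
    w ∈ pathsF src tgt q q' n ↔ w.length = n ∧ IsPathFrom src tgt q w q' := by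
  simp only [pathsF, Finset.mem_filter, Finset.mem_image, Finset.mem_univ, true_and]
  constructor
  · rintro ⟨⟨v, rfl⟩, h⟩
    exact ⟨v.2, h⟩
  · rintro ⟨hl, h⟩
    exact ⟨⟨⟨w, hl⟩, rfl⟩, h⟩

lemma card_pathsF_le (q q' : Q) (n : ℕ) :
    (pathsF src tgt q q' n).card ≤ Fintype.card σ ^ n := by
  calc (pathsF src tgt q q' n).card
      ≤ ((Finset.univ : Finset (List.Vector σ n)).image List.Vector.toList).card :=
        Finset.card_filter_le _ _
    _ ≤ (Finset.univ : Finset (List.Vector σ n)).card := Finset.card_image_le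
    _ = Fintype.card σ ^ n := by rw [Finset.card_univ, card_vector]

lemma natCard_eq_pathsF (P : List σ → Prop) (s : Finset (List σ))
    (h : ∀ w, P w ↔ w ∈ s) : Nat.card {w : List σ // P w} = s.card := by
  rw [← Nat.card_eq_finsetCard]
  exact Nat.card_congr (Equiv.subtypeEquivRight h)

/-- Splitting bound: `u`-avoiding paths of length `n₁ + n₂` inject into pairs of
`u`-avoiding paths through an intermediate state. -/
lemma bad_split (u : List σ) (q q'' : Q) (n₁ n₂ : ℕ) :
    ((pathsF src tgt q q'' (n₁ + n₂)).filter (fun w => ¬ u <:+: w)).card ≤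
      ∑ qm : Q, ((pathsF src tgt q qm n₁).filter (fun w => ¬ u <:+: w)).card *
        ((pathsF src tgt qm q'' n₂).filter (fun w => ¬ u <:+: w)).card := by
  have hsub : ((pathsF src tgt q q'' (n₁ + n₂)).filter (fun w => ¬ u <:+: w)) ⊆
      Finset.univ.biUnion (fun qm =>
        (((pathsF src tgt q qm n₁).filter (fun w => ¬ u <:+: w)) ×ˢ
          ((pathsF src tgt qm q'' n₂).filter (fun w => ¬ u <:+: w))).image
            (fun p => p.1 ++ p.2)) := by
    intro w hw
    rw [Finset.mem_filter, mem_pathsF] at hw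
    obtain ⟨⟨hlen, hpath⟩, hinf⟩ := hw
    have hsplit : w.take n₁ ++ w.drop n₁ = w := List.take_append_drop _ _
    rw [← hsplit] at hpath
    obtain ⟨qm, h1, h2⟩ := (isPathFrom_append src tgt).mp hpath
    have hl1 : (w.take n₁).length = n₁ := by
      rw [List.length_take]; omega
    have hl2 : (w.drop n₁).length = n₂ := by
      rw [List.length_drop]; omega
    refine Finset.mem_biUnion.mpr ⟨qm, Finset.mem_univ _, Finset.mem_image.mpr
      ⟨(w.take n₁, w.drop n₁), Finset.mem_product.mpr ⟨?_, ?_⟩, hsplit⟩⟩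
    · rw [Finset.mem_filter, mem_pathsF]
      refine ⟨⟨hl1, h1⟩, fun hc => hinf ?_⟩
      exact hc.trans (List.IsPrefix.isInfix ⟨w.drop n₁, hsplit⟩)
    · rw [Finset.mem_filter, mem_pathsF]
      refine ⟨⟨hl2, h2⟩, fun hc => hinf ?_⟩
      exact hc.trans (List.IsSuffix.isInfix ⟨w.take n₁, hsplit⟩)
  calc ((pathsF src tgt q q'' (n₁ + n₂)).filter (fun w => ¬ u <:+: w)).card
      ≤ _ := Finset.card_le_card hsub
    _ ≤ ∑ qm : Q, ((((pathsF src tgt q qm n₁).filter (fun w => ¬ u <:+: w)) ×ˢ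
          ((pathsF src tgt qm q'' n₂).filter (fun w => ¬ u <:+: w))).image
            (fun p => p.1 ++ p.2)).card := Finset.card_biUnion_le
    _ ≤ _ := by
        refine Finset.sum_le_sum fun qm _ => ?_
        calc _ ≤ _ := Finset.card_image_le
          _ = _ := Finset.card_product _ _

/-- Joining bound: pairs of paths through an intermediate state inject into paths
of the combined length. -/
lemma paths_join (q q'' : Q) (n₁ n₂ : ℕ) :
    ∑ qm : Q, (pathsF src tgt q qm n₁).card * (pathsF src tgt qm q'' n₂).card ≤
      (pathsF src tgt q q'' (n₁ + n₂)).card := by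
  have hdisj : ∀ qm ∈ (Finset.univ : Finset Q), ∀ qm' ∈ (Finset.univ : Finset Q), qm ≠ qm' →
      Disjoint
        (((pathsF src tgt q qm n₁) ×ˢ (pathsF src tgt qm q'' n₂)).image (fun p => p.1 ++ p.2))
        (((pathsF src tgt q qm' n₁) ×ˢ (pathsF src tgt qm' q'' n₂)).image
          (fun p => p.1 ++ p.2)) := by
    intro qm _ qm' _ hne
    rw [Finset.disjoint_left]
    rintro w hw hw'
    simp only [Finset.mem_image, Finset.mem_product] at hw hw'
    obtain ⟨⟨w₁, w₂⟩, ⟨h1, h2⟩, rfl⟩ := hw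
    obtain ⟨⟨w₁', w₂'⟩, ⟨h1', h2'⟩, heq⟩ := hw'
    rw [mem_pathsF] at h1 h2 h1' h2'
    obtain ⟨e1, _⟩ := List.append_inj heq (by rw [h1'.1, h1.1])
    have e1' : w₁' = w₁ := e1
    exact hne (isPathFrom_unique src tgt h1.2
      (show IsPathFrom src tgt q w₁ qm' from e1' ▸ h1'.2))
  have hsub : Finset.univ.biUnion (fun qm =>
      ((pathsF src tgt q qm n₁) ×ˢ (pathsF src tgt qm q'' n₂)).image (fun p => p.1 ++ p.2)) ⊆
      pathsF src tgt q q'' (n₁ + n₂) := by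
    intro w hw
    simp only [Finset.mem_biUnion, Finset.mem_image, Finset.mem_product] at hw
    obtain ⟨qm, _, ⟨w₁, w₂⟩, ⟨h1, h2⟩, rfl⟩ := hw
    rw [mem_pathsF] at h1 h2 ⊢
    refine ⟨by rw [List.length_append, h1.1, h2.1], ?_⟩
    exact (isPathFrom_append src tgt).mpr ⟨qm, h1.2, h2.2⟩
  have hinj : ∀ qm : Q,
      (((pathsF src tgt q qm n₁) ×ˢ (pathsF src tgt qm q'' n₂)).image
        (fun p => p.1 ++ p.2)).card =
      ((pathsF src tgt q qm n₁) ×ˢ (pathsF src tgt qm q'' n₂)).card := by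
    intro qm
    refine Finset.card_image_of_injOn ?_
    rintro ⟨w₁, w₂⟩ hp ⟨w₁', w₂'⟩ hp' heq
    simp only [Finset.mem_coe, Finset.mem_product, mem_pathsF] at hp hp'
    obtain ⟨e1, e2⟩ := List.append_inj heq (by rw [hp.1.1, hp'.1.1])
    exact Prod.ext e1 e2
  calc ∑ qm : Q, (pathsF src tgt q qm n₁).card * (pathsF src tgt qm q'' n₂).card
      = ∑ qm : Q, ((pathsF src tgt q qm n₁) ×ˢ (pathsF src tgt qm q'' n₂)).card := by
        simp [Finset.card_product]
    _ = ∑ qm : Q, (((pathsF src tgt q qm n₁) ×ˢ (pathsF src tgt qm q'' n₂)).image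
          (fun p => p.1 ++ p.2)).card := by
        exact (Finset.sum_congr rfl fun qm _ => (hinj qm).symm)
    _ = (Finset.univ.biUnion (fun qm =>
          ((pathsF src tgt q qm n₁) ×ˢ (pathsF src tgt qm q'' n₂)).image
            (fun p => p.1 ++ p.2))).card := (Finset.card_biUnion hdisj).symm
    _ ≤ _ := Finset.card_le_card hsub

end Aux

/-- in a finite directed (multi-)graph whose adjacency matrix is
primitive (there is `l > 0` with a path of length `l` between any ordered pair of
states), for any fixed path `u` and state `E`, the proportion among loops of length
`l` based at `E` of those NOT containing `u` as a consecutive sub-path tends to `0`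
exponentially fast as `l → ∞`. -/
theorem stmt_14 {σ Q : Type*} [Fintype σ] [Fintype Q] (src tgt : σ → Q)
    (hprim : ∃ l : ℕ, 0 < l ∧ ∀ q q' : Q, ∃ w : List σ, w.length = l ∧ IsPathFrom src tgt q w q')
    (u : List σ) (q₀ q₁ : Q) (hu : IsPathFrom src tgt q₀ u q₁) (E : Q) :
    ∃ C r : ℝ, 0 < C ∧ 0 ≤ r ∧ r < 1 ∧ ∀ l : ℕ,
      (Nat.card {w : List σ // w.length = l ∧ IsPathFrom src tgt E w E ∧ ¬ u <:+: w} : ℝ)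
        ≤ C * r ^ l * (Nat.card {w : List σ // w.length = l ∧ IsPathFrom src tgt E w E} : ℝ) := by
  classical
  obtain ⟨l₀, hl₀, hpaths⟩ := hprim
  set m : ℕ := l₀ + u.length + l₀ with hm_def
  have hm : 0 < m := by omega
  -- In every block of length `m` between any two states there is a path containing `u`.
  have key : ∀ q q' : Q,
      ((pathsF src tgt q q' m).filter (fun w => ¬ u <:+: w)).card + 1 ≤
        (pathsF src tgt q q' m).card := by
    intro q q'
    obtain ⟨wa, hwa_len, hwa⟩ := hpaths q q₀
    obtain ⟨wb, hwb_len, hwb⟩ := hpaths q₁ q'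
    have hg_mem : wa ++ u ++ wb ∈ pathsF src tgt q q' m := by
      rw [mem_pathsF]
      constructor
      · simp only [List.length_append, hwa_len, hwb_len]
        try omega
      · refine (isPathFrom_append src tgt).mpr ⟨q₁, ?_, hwb⟩
        exact (isPathFrom_append src tgt).mpr ⟨q₀, hwa, hu⟩
    have hg_inf : u <:+: wa ++ u ++ wb := List.infix_append _ _ _
    have hss : ((pathsF src tgt q q' m).filter (fun w => ¬ u <:+: w)) ⊂
        pathsF src tgt q q' m := by
      refine (Finset.ssubset_iff_of_subset (Finset.filter_subset _ _)).mpr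
        ⟨wa ++ u ++ wb, hg_mem, ?_⟩
      simp [Finset.mem_filter, hg_inf]
    exact Finset.card_lt_card hss
  set M : ℕ := Fintype.card σ ^ m with hM_def
  have hbound : ∀ q q' : Q, (pathsF src tgt q q' m).card ≤ M := fun q q' =>
    card_pathsF_le src tgt q q' m
  have hM1 : 1 ≤ M := le_trans (by have := key E E; omega) (hbound E E)
  obtain ⟨M', hM'⟩ : ∃ M', M = M' + 1 := ⟨M - 1, by omega⟩
  -- per-pair bound : bad * M ≤ all * (M - 1)
  have pair : ∀ q q' : Q,
      ((pathsF src tgt q q' m).filter (fun w => ¬ u <:+: w)).card * M ≤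
        (pathsF src tgt q q' m).card * M' := by
    intro q q'
    have hb1 := key q q'
    have ha := hbound q q'
    set b := ((pathsF src tgt q q' m).filter (fun w => ¬ u <:+: w)).card
    set a := (pathsF src tgt q q' m).card
    calc b * M = b * M' + b := by rw [hM']; ring
      _ ≤ b * M' + M' := by omega
      _ = (b + 1) * M' := by ring
      _ ≤ a * M' := Nat.mul_le_mul_right _ hb1
  -- main induction: B(q → E, m*k + n) * M^k ≤ (M-1)^k * N(q → E, m*k + n)
  have main : ∀ k n : ℕ, ∀ q : Q,
      ((pathsF src tgt q E (m * k + n)).filter (fun w => ¬ u <:+: w)).card * M ^ k ≤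
        M' ^ k * (pathsF src tgt q E (m * k + n)).card := by
    intro k
    induction k with
    | zero =>
      intro n q
      simpa using Finset.card_filter_le _ _
    | succ k ih =>
      intro n q
      have hlen : m * (k + 1) + n = m + (m * k + n) := by ring
      rw [hlen]
      calc ((pathsF src tgt q E (m + (m * k + n))).filter (fun w => ¬ u <:+: w)).card *
            M ^ (k + 1)
          ≤ (∑ qm : Q, ((pathsF src tgt q qm m).filter (fun w => ¬ u <:+: w)).card *
              ((pathsF src tgt qm E (m * k + n)).filter (fun w => ¬ u <:+: w)).card) *
              M ^ (k + 1) :=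
            Nat.mul_le_mul_right _ (bad_split src tgt u q E m (m * k + n))
        _ = ∑ qm : Q, (((pathsF src tgt q qm m).filter (fun w => ¬ u <:+: w)).card * M) *
              (((pathsF src tgt qm E (m * k + n)).filter (fun w => ¬ u <:+: w)).card *
                M ^ k) := by
            rw [Finset.sum_mul]
            exact Finset.sum_congr rfl fun qm _ => by ring
        _ ≤ ∑ qm : Q, ((pathsF src tgt q qm m).card * M') *
              (M' ^ k * (pathsF src tgt qm E (m * k + n)).card) :=
            Finset.sum_le_sum fun qm _ => Nat.mul_le_mul (pair q qm) (ih n qm)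
        _ = M' ^ (k + 1) *
              ∑ qm : Q, (pathsF src tgt q qm m).card * (pathsF src tgt qm E (m * k + n)).card := by
            rw [Finset.mul_sum]
            exact Finset.sum_congr rfl fun qm _ => by ring
        _ ≤ M' ^ (k + 1) * (pathsF src tgt q E (m + (m * k + n))).card :=
            Nat.mul_le_mul_left _ (paths_join src tgt q E m (m * k + n))
  -- now pass to the reals
  have hMpos : (0 : ℝ) < (M : ℝ) := by exact_mod_cast hM1
  set ρ : ℝ := (M' : ℝ) / (M : ℝ) with hρ_def
  have hρ0 : 0 ≤ ρ := by positivity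
  have hρ1 : ρ < 1 := by
    rw [hρ_def, div_lt_one hMpos]
    exact_mod_cast (by omega : M' < M)
  set r₁ : ℝ := max (1 / 2) ρ with hr₁_def
  have hr₁0 : (0 : ℝ) < r₁ := lt_max_of_lt_left (by norm_num)
  have hr₁1 : r₁ < 1 := max_lt (by norm_num) hρ1
  have hr₁half : (1 / 2 : ℝ) ≤ r₁ := le_max_left _ _
  refine ⟨2, r₁ ^ ((m : ℝ)⁻¹), by norm_num, Real.rpow_nonneg hr₁0.le _,
    Real.rpow_lt_one hr₁0.le hr₁1 (by positivity), ?_⟩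
  intro l
  set k : ℕ := l / m with hk_def
  have hlk : m * k + l % m = l := Nat.div_add_mod l m
  have hmod : l % m < m := Nat.mod_lt _ hm
  -- identify the Nat.cards with Finset cards
  have hBeq : Nat.card {w : List σ // w.length = l ∧ IsPathFrom src tgt E w E ∧ ¬ u <:+: w} =
      ((pathsF src tgt E E l).filter (fun w => ¬ u <:+: w)).card := by
    refine natCard_eq_pathsF _ _ fun w => ?_
    rw [Finset.mem_filter, mem_pathsF]
    tauto
  have hNeq : Nat.card {w : List σ // w.length = l ∧ IsPathFrom src tgt E w E} =
      (pathsF src tgt E E l).card := by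
    exact natCard_eq_pathsF _ _ fun w => (mem_pathsF src tgt).symm
  set B : ℕ := ((pathsF src tgt E E l).filter (fun w => ¬ u <:+: w)).card with hB_def
  set N : ℕ := (pathsF src tgt E E l).card with hN_def
  rw [hBeq, hNeq]
  have hmain := main k (l % m) E
  rw [hlk] at hmain
  -- B * M^k ≤ M'^k * N, hence (B:ℝ) ≤ ρ^k * N
  have h1 : (B : ℝ) ≤ ρ ^ k * (N : ℝ) := by
    have hcast : (B : ℝ) * (M : ℝ) ^ k ≤ (M' : ℝ) ^ k * (N : ℝ) := by exact_mod_cast hmain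
    have hMk : (0 : ℝ) < (M : ℝ) ^ k := by positivity
    have : (B : ℝ) ≤ ((M' : ℝ) ^ k * (N : ℝ)) / (M : ℝ) ^ k := by
      rw [le_div_iff₀ hMk]; exact hcast
    calc (B : ℝ) ≤ ((M' : ℝ) ^ k * (N : ℝ)) / (M : ℝ) ^ k := this
      _ = ρ ^ k * (N : ℝ) := by rw [hρ_def, div_pow]; ring
  have h2 : ρ ^ k ≤ r₁ ^ k := pow_le_pow_left₀ hρ0 (le_max_right _ _) k
  -- r₁ ^ k ≤ 2 * (r₁ ^ (1/m)) ^ l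
  have h3 : r₁ ^ k ≤ 2 * (r₁ ^ ((m : ℝ)⁻¹)) ^ l := by
    have hrl : (r₁ ^ ((m : ℝ)⁻¹)) ^ l = r₁ ^ ((m : ℝ)⁻¹ * l) := by
      rw [← Real.rpow_natCast (r₁ ^ ((m : ℝ)⁻¹)) l, ← Real.rpow_mul hr₁0.le]
    have hexp : (m : ℝ)⁻¹ * (l : ℝ) ≤ ((k : ℝ) + 1) := by
      rw [inv_mul_le_iff₀ (by exact_mod_cast hm)]
      have : (l : ℝ) ≤ (m : ℝ) * (k : ℝ) + (m : ℝ) := by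
        have : l < m * k + m := by omega
        push_cast
        exact_mod_cast (le_of_lt (by exact_mod_cast this : (l : ℝ) < (m * k + m : ℕ)))
      linarith
    have hmono : r₁ ^ (((k : ℝ) + 1)) ≤ r₁ ^ ((m : ℝ)⁻¹ * (l : ℝ)) :=
      Real.rpow_le_rpow_of_exponent_ge hr₁0 hr₁1.le hexp
    have hnpow : r₁ ^ (((k : ℝ) + 1)) = r₁ ^ (k + 1) := by
      rw [← Real.rpow_natCast r₁ (k + 1)]
      push_cast
      ring_nf
    have : r₁ ^ k * (1 / 2) ≤ (r₁ ^ ((m : ℝ)⁻¹)) ^ l := by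
      rw [hrl]
      calc r₁ ^ k * (1 / 2) ≤ r₁ ^ k * r₁ := by
            exact mul_le_mul_of_nonneg_left hr₁half (pow_nonneg hr₁0.le _)
        _ = r₁ ^ (k + 1) := by ring
        _ = r₁ ^ (((k : ℝ) + 1)) := hnpow.symm
        _ ≤ _ := hmono
    linarith
  have hN0 : (0 : ℝ) ≤ (N : ℝ) := Nat.cast_nonneg _
  calc (B : ℝ) ≤ ρ ^ k * (N : ℝ) := h1
    _ ≤ r₁ ^ k * (N : ℝ) := mul_le_mul_of_nonneg_right h2 hN0
    _ ≤ (2 * (r₁ ^ ((m : ℝ)⁻¹)) ^ l) * (N : ℝ) := mul_le_mul_of_nonneg_right h3 hN0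
    _ = 2 * (r₁ ^ ((m : ℝ)⁻¹)) ^ l * (N : ℝ) := by ring
end

section
/- Let X be a geodesic metric space with base point P, and suppose a family W of words over an alphabet S of isometries of X satisfies: there is R ≥ 0 such that for every word x₁x₂…xₖ ∈ W and all 0 ≤ i < j ≤ k, the points x₁…xₘ·P for i ≤ m ≤ j lie within distance R of every geodesic from x₁…xᵢ·P to x₁…xⱼ·P (the geodesic words hypothesis). Then the shadow paths (P, x₁·P, x₁x₂·P, …) of words in W form a uniform family of unparameterized quasi-geodesics in X: the quasi-geodesic constants after monotone reparameterization depend only on R and on c = max_{g∈S} d(P, g·P). -/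
lemma pigeonhole_sep (q : ℕ) (L : ℝ) (hL : 0 ≤ L) (t : ℕ → ℝ)
    (hmem : ∀ i < q, t i ∈ Set.Icc (0:ℝ) L)
    (hsep : ∀ i j, i < q → j < q → i ≠ j → 1 < |t i - t j|) :
    (q : ℝ) - 1 ≤ L := by
  have hinj : Set.InjOn (fun i => ⌊t i⌋) (Finset.range q) := by
    intro i hi j hj hij
    by_contra hne
    have := hsep i j (Finset.mem_range.mp hi) (Finset.mem_range.mp hj) hne
    have := Int.abs_sub_lt_one_of_floor_eq_floor hij
    linarith
  have hsub : ∀ i ∈ Finset.range q, ⌊t i⌋ ∈ Finset.Icc (0:ℤ) ⌊L⌋ := by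
    intro i hi
    obtain ⟨h0, h1⟩ := hmem i (Finset.mem_range.mp hi)
    exact Finset.mem_Icc.mpr ⟨Int.le_floor.mpr (by exact_mod_cast h0), Int.floor_le_floor h1⟩
  have hcard := Finset.card_le_card_of_injOn _ hsub hinj
  rw [Finset.card_range, Int.card_Icc] at hcard
  have hfl : (0:ℤ) ≤ ⌊L⌋ := Int.floor_nonneg.mpr hL
  have h2 : (q : ℤ) ≤ ⌊L⌋ + 1 := by omega
  have h3 : ((⌊L⌋ : ℝ)) ≤ L := Int.floor_le L
  have h4 : (q : ℝ) ≤ (⌊L⌋ : ℝ) + 1 := by exact_mod_cast h2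
  linarith

/-- if a family of words over an alphabet `S` of isometries satisfies the
geodesic words hypothesis with constant `R`, and every letter moves the base point `P`
by at most `c`, then the shadow paths of these words form a uniform family of
unparameterized quasi-geodesics: there are constants `λ ≥ 1`, `c' ≥ 0` (depending only
on `R` and `c`) such that each shadow path becomes a `(λ,c')`-quasi-geodesic after a
monotone reparameterization. -/
theorem stmt_19 {G X : Type*} [Group G] [MetricSpace X] [MulAction G X]
    (hiso : ∀ g : G, Isometry fun x : X => g • x)
    (hgeod : ∀ a b : X, ∃ γ : ℝ → X, IsGeod γ a b)
    (P : X) (S : Set G) (R c : ℝ) (hR : 0 ≤ R) (hc : 0 ≤ c)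
    (hmove : ∀ g ∈ S, dist P (g • P) ≤ c) :
    ∃ lam c' : ℝ, 1 ≤ lam ∧ 0 ≤ c' ∧
      ∀ (k : ℕ) (x π : ℕ → G), π 0 = 1 → (∀ m : ℕ, π (m + 1) = π m * x (m + 1)) →
        (∀ m : ℕ, 1 ≤ m → m ≤ k → x m ∈ S) →
        (∀ i j : ℕ, i < j → j ≤ k → ∀ γ : ℝ → X, IsGeod γ (π i • P) (π j • P) →
          ∀ m : ℕ, i ≤ m → m ≤ j → NearGeod R (π m • P) γ (π i • P) (π j • P)) →
        ∃ (N : ℕ) (φ : ℕ → ℕ), Monotone φ ∧ φ 0 = 0 ∧ φ N = k ∧ (∀ m, φ m ≤ k) ∧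
          ∀ m n : ℕ, m ≤ N → n ≤ N →
            |(m : ℝ) - n| / lam - c' ≤ dist (π (φ m) • P) (π (φ n) • P) ∧
            dist (π (φ m) • P) (π (φ n) • P) ≤ lam * |(m : ℝ) - n| + c' := by
  classical
  set D : ℝ := 2*R + c + 1 with hDdef
  have hD0 : 0 ≤ D := by simp only [hDdef]; linarith
  have hcD : c ≤ D := by simp only [hDdef]; linarith
  refine ⟨D + 1, 1, by simp only [hDdef]; linarith, by norm_num, ?_⟩
  intro k x π hπ0 hπs hxS hgw
  -- consecutive shadow points are at distance at most c
  have hstep : ∀ m : ℕ, m + 1 ≤ k → dist (π m • P) (π (m+1) • P) ≤ c := by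
    intro m hm
    have h1 : π (m+1) • P = π m • (x (m+1) • P) := by rw [hπs m, mul_smul]
    rw [h1]
    have h2 : dist (π m • P) (π m • (x (m+1) • P)) = dist P (x (m+1) • P) :=
      (hiso (π m)).dist_eq P (x (m+1) • P)
    rw [h2]
    exact hmove _ (hxS (m+1) (by omega) hm)
  set Q : ℕ → ℕ → Prop := fun i j => dist (π i • P) (π j • P) ≤ D with hQdef
  have hQself : ∀ i, Q i i := by intro i; simp only [hQdef]; rw [dist_self]; exact hD0
  set step : ℕ → ℕ := fun i => Nat.findGreatest (Q i) k with hstepdef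
  set φ : ℕ → ℕ := fun m => Nat.rec 0 (fun _ prev => step prev) m with hφdef
  have hφ0 : φ 0 = 0 := rfl
  have hφsucc : ∀ m, φ (m+1) = step (φ m) := fun _ => rfl
  have hφk : ∀ m, φ m ≤ k := by
    intro m
    induction m with
    | zero => exact Nat.zero_le k
    | succ m _ => rw [hφsucc]; exact Nat.findGreatest_le k
  have hle : ∀ m, φ m ≤ φ (m+1) := by
    intro m
    rw [hφsucc]
    exact Nat.le_findGreatest (hφk m) (hQself (φ m))
  have hmono : Monotone φ := monotone_nat_of_le_succ hle
  have hconsec : ∀ m, dist (π (φ m) • P) (π (φ (m+1)) • P) ≤ D := by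
    intro m
    rw [hφsucc]
    exact Nat.findGreatest_spec (P := Q (φ m)) (hφk m) (hQself (φ m))
  have hstrict : ∀ m, φ m < k → φ m + 1 ≤ φ (m+1) := by
    intro m hm
    rw [hφsucc]
    exact Nat.le_findGreatest hm (le_trans (hstep (φ m) hm) hcD)
  have hreach : ∀ m, min m k ≤ φ m := by
    intro m
    induction m with
    | zero => simp [hφ0]
    | succ m ih =>
      by_cases h : φ m = k
      · have : φ (m+1) = k := by
          rw [hφsucc, h]
          exact le_antisymm (Nat.findGreatest_le k) (Nat.le_findGreatest le_rfl (hQself k))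
        omega
      · have h2 : φ m < k := lt_of_le_of_ne (hφk m) h
        have := hstrict m h2
        omega
  have hφkk : φ k = k := by have := hreach k; have := hφk k; omega
  set N := Nat.find (⟨k, hφkk⟩ : ∃ m, φ m = k) with hNdef
  have hN : φ N = k := Nat.find_spec (⟨k, hφkk⟩ : ∃ m, φ m = k)
  have hNlt : ∀ m, m < N → φ m ≠ k := by
    intro m hm
    exact Nat.find_min (⟨k, hφkk⟩ : ∃ m, φ m = k) (m := m) hm
  have hstrictmono : ∀ m n, m < n → n ≤ N → φ m < φ n := by
    intro m n hmn hnN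
    have h1 : φ m < k := lt_of_le_of_ne (hφk m) (hNlt m (by omega))
    exact lt_of_lt_of_le (hstrict m h1) (hmono (by omega : m + 1 ≤ n))
  have hsep : ∀ s s', s + 2 ≤ s' → s' ≤ N → D < dist (π (φ s) • P) (π (φ s') • P) := by
    intro s s' hss' hs'N
    have h1 : φ (s+1) < φ s' := hstrictmono (s+1) s' (by omega) hs'N
    have h2 : Nat.findGreatest (Q (φ s)) k < φ s' := by
      have h2' := h1
      simp only [hφsucc, hstepdef] at h2'
      exact h2'
    have h3 := Nat.findGreatest_is_greatest h2 (hφk s')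
    exact not_le.mp h3
  have hup : ∀ m j, dist (π (φ m) • P) (π (φ (m + j)) • P) ≤ D * j := by
    intro m j
    induction j with
    | zero => simp
    | succ j ih =>
      have htr := dist_triangle (π (φ m) • P) (π (φ (m+j)) • P) (π (φ (m+j+1)) • P)
      have hc2 := hconsec (m+j)
      have he : m + (j+1) = m + j + 1 := rfl
      rw [he]
      push_cast
      linarith
  -- the lower bound
  have hlow : ∀ m n, m ≤ n → n ≤ N →
      ((n:ℝ) - m)/2 - 1 ≤ dist (π (φ m) • P) (π (φ n) • P) := by
    intro m n hmn hnN
    rcases eq_or_lt_of_le hmn with rfl | hlt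
    · simp only [sub_self, zero_div, zero_sub]
      have := dist_nonneg (x := π (φ m) • P) (y := π (φ m) • P)
      linarith
    · have hij : φ m < φ n := hstrictmono m n hlt hnN
      obtain ⟨γ, hγ⟩ := hgeod (π (φ m) • P) (π (φ n) • P)
      have hnear := hgw (φ m) (φ n) hij (hφk n) γ hγ
      set L := dist (π (φ m) • P) (π (φ n) • P) with hLdef
      have hch : ∀ s, m ≤ s ∧ s ≤ n →
          ∃ t ∈ Set.Icc (0:ℝ) L, dist (π (φ s) • P) (γ t) ≤ R :=
        fun s h => hnear (φ s) (hmono h.1) (hmono h.2)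
      set u : ℕ → ℝ := fun s => if h : m ≤ s ∧ s ≤ n then (hch s h).choose else 0 with hudef
      have hu : ∀ s, m ≤ s → s ≤ n →
          u s ∈ Set.Icc (0:ℝ) L ∧ dist (π (φ s) • P) (γ (u s)) ≤ R := by
        intro s h1 h2
        have hcond : m ≤ s ∧ s ≤ n := ⟨h1, h2⟩
        simp only [hudef, dif_pos hcond]
        exact ⟨(hch s hcond).choose_spec.1, (hch s hcond).choose_spec.2⟩
      set q : ℕ := (n - m)/2 + 1 with hqdef
      have hL0 : 0 ≤ L := dist_nonneg
      have hidx : ∀ i, i < q → m ≤ m + 2*i ∧ m + 2*i ≤ n := by intro i hi; omega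
      have hpig : (q:ℝ) - 1 ≤ L := by
        apply pigeonhole_sep q L hL0 (fun i => u (m + 2*i))
        · intro i hi
          exact (hu (m + 2*i) (hidx i hi).1 (hidx i hi).2).1
        · intro i j hi hj hne
          -- wlog i < j
          have key : ∀ i j, i < q → j < q → i < j → 1 < |u (m + 2*i) - u (m + 2*j)| := by
            intro i j hi hj hij2
            set s := m + 2*i with hs
            set s' := m + 2*j with hs'
            have h1 := hu s (hidx i hi).1 (hidx i hi).2
            have h2 := hu s' (hidx j hj).1 (hidx j hj).2
            have hd : D < dist (π (φ s) • P) (π (φ s') • P) :=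
              hsep s s' (by omega) (le_trans (hidx j hj).2 hnN)
            have habs : dist (γ (u s)) (γ (u s')) = |u s - u s'| :=
              hγ.2.2 (u s) h1.1 (u s') h2.1
            have htr : dist (π (φ s) • P) (π (φ s') • P) ≤
                dist (π (φ s) • P) (γ (u s)) + dist (γ (u s)) (γ (u s'))
                  + dist (γ (u s')) (π (φ s') • P) :=
              dist_triangle4 _ _ _ _
            have hcm : dist (γ (u s')) (π (φ s') • P) = dist (π (φ s') • P) (γ (u s')) :=
              dist_comm _ _
            rw [habs, hcm] at htr
            have := h1.2
            have := h2.2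
            simp only [hDdef] at hd
            linarith
          rcases lt_or_gt_of_ne hne with h | h
          · exact key i j hi hj h
          · rw [abs_sub_comm]; exact key j i hj hi h
      -- arithmetic
      have hq2 : (n - m : ℕ) + 1 ≤ 2 * q := by omega
      have hcast : ((n - m : ℕ) : ℝ) = (n:ℝ) - m := by
        push_cast [Nat.cast_sub hmn]; ring
      have hq3 : ((n - m : ℕ) : ℝ) + 1 ≤ 2 * (q:ℝ) := by exact_mod_cast hq2
      rw [hcast] at hq3
      linarith
  -- assemble
  refine ⟨N, φ, hmono, hφ0, hN, hφk, ?_⟩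
  have main : ∀ m n, m ≤ n → n ≤ N →
      ((n:ℝ) - m) / (D + 1) - 1 ≤ dist (π (φ m) • P) (π (φ n) • P) ∧
      dist (π (φ m) • P) (π (φ n) • P) ≤ (D + 1) * ((n:ℝ) - m) + 1 := by
    intro m n hmn hnN
    have hnm0 : (0:ℝ) ≤ (n:ℝ) - m := by
      have : (m:ℝ) ≤ n := Nat.cast_le.mpr hmn
      linarith
    constructor
    · have hl := hlow m n hmn hnN
      have hdiv : ((n:ℝ) - m) / (D + 1) ≤ ((n:ℝ) - m) / 2 := by
        apply div_le_div_of_nonneg_left hnm0 (by norm_num)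
        simp only [hDdef]; linarith
      linarith
    · have hu2 := hup m (n - m)
      rw [Nat.add_sub_cancel' hmn] at hu2
      have hcast : ((n - m : ℕ) : ℝ) = (n:ℝ) - m := by push_cast [Nat.cast_sub hmn]; ring
      rw [hcast] at hu2
      nlinarith [mul_le_mul_of_nonneg_right (show D ≤ D + 1 by linarith) hnm0]
  intro m n hm hn
  rcases le_total m n with h | h
  · have := main m n h hn
    have habs : |(m:ℝ) - n| = (n:ℝ) - m := by
      rw [abs_sub_comm]
      exact abs_of_nonneg (by have : (m:ℝ) ≤ n := Nat.cast_le.mpr h; linarith)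
    rw [habs]
    exact this
  · have := main n m h hm
    have habs : |(m:ℝ) - n| = (m:ℝ) - n := 
      abs_of_nonneg (by have : (n:ℝ) ≤ m := Nat.cast_le.mpr h; linarith)
    rw [habs, dist_comm]
    exact this
end
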